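/- If H : α → ℕ is injective and L is the strictly sorted list of hashes of a revoked set R, then after revoking one more credential c₀ ∉ R (inserting H(c₀) into L to get L'), for every credential c ≠ c₀ with c ∉ R, the hash H(c) still admits no membership in L' and (assuming 0 < H(c) and H(c) bounded by a sentinel M exceeding all elements of L') still admits a gap witness in 0 :: L' ++ [M]. -/

import Mathlib

theorem List.exists_getElem_lt_lt_getElem_succ {α : Type*} [LinearOrder α] {a b x : α}
    (hax : a < x) (hxb : x < b) :
    ∀ {l : List α}, x ∉ l →
      ∃ i, ∃ hi : i + 1 < (a :: (l ++ [b])).length,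
        (a :: (l ++ [b]))[i] < x ∧ x < (a :: (l ++ [b]))[i + 1]
  | [], _ => ⟨0, by simp, by simpa using hax, by simpa using hxb⟩
  | y :: l, hx => by
    rw [List.mem_cons, not_or] at hx
    rcases lt_or_gt_of_ne hx.1 with hxy | hyx
    · exact ⟨0, by simp, by simpa using hax, by simpa using hxy⟩
    · obtain ⟨i, hi, hlt, hgt⟩ := exists_getElem_lt_lt_getElem_succ hyx hxb hx.2
      exact ⟨i + 1, by simpa using hi, by simpa using hlt, by simpa using hgt⟩

theorem revocation_update_preserves_witness_general {α : Type*} [DecidableEq α]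
    (H : α → ℕ) (hH : Function.Injective H) (R : Finset α) (c₀ : α)
    (L' : List ℕ) (hL' : L' = Finset.sort ((insert c₀ R).image H) (· ≤ ·))
    (c : α) (hne : c ≠ c₀) (hc : c ∉ R) (hpos : 0 < H c)
    (M : ℕ) (hcM : H c < M) :
    H c ∉ L' ∧
      ∃ i, ∃ hi : i + 1 < (0 :: (L' ++ [M])).length,
        (0 :: (L' ++ [M])).get ⟨i, Nat.lt_of_succ_lt hi⟩ < H c ∧
          H c < (0 :: (L' ++ [M])).get ⟨i + 1, hi⟩ := by
  have hnotin : H c ∉ L' := by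
    rw [hL', Finset.mem_sort, hH.mem_finset_image, Finset.mem_insert, not_or]
    exact ⟨hne, hc⟩
  exact ⟨hnotin, List.exists_getElem_lt_lt_getElem_succ hpos hcM hnotin⟩

theorem revocation_update_preserves_witness {α : Type*} [DecidableEq α]
    (H : α → ℕ) (hH : Function.Injective H) (R : Finset α) (c₀ : α)
    (hc₀ : c₀ ∉ R)
    (L' : List ℕ) (hL' : L' = Finset.sort ((insert c₀ R).image H) (· ≤ ·))
    (c : α) (hne : c ≠ c₀) (hc : c ∉ R) (hpos : 0 < H c)
    (M : ℕ) (hM : ∀ x ∈ L', x < M) (hcM : H c < M) :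
    H c ∉ L' ∧
      ∃ i, ∃ hi : i + 1 < (0 :: (L' ++ [M])).length,
        (0 :: (L' ++ [M])).get ⟨i, Nat.lt_of_succ_lt hi⟩ < H c ∧
          H c < (0 :: (L' ++ [M])).get ⟨i + 1, hi⟩ :=
  revocation_update_preserves_witness_general H hH R c₀ L' hL' c hne hc hpos M hcM
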